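/- Under the hypotheses: A an n×N real matrix, B an n×m real matrix, U₀ an m×T real matrix, Z₀ an N×T real matrix, X₁ := A · Z₀ + B · U₀; Z : ℝⁿ → ℝᴺ differentiable with Jacobian J(ξ); P a symmetric positive definite N×N real matrix; Y : ℝⁿ → ℝ^{T×N} with Z₀ · Y(ξ) = P for all ξ; ε : ℝⁿ → ℝ nonnegative; −[J(ξ) X₁ Y(ξ) + (J(ξ) X₁ Y(ξ))ᵀ] − ε(ξ) I_N positive semidefinite for all ξ; and x : ℝ → ℝⁿ differentiable with x'(t) = (A + B F(x(t))) Z(x(t)) where F(ξ) := U₀ Y(ξ) P⁻¹ — the function t ↦ V(x(t)), with V(ξ) := Z(ξ)ᵀ P⁻¹ Z(ξ), is differentiable at every t with derivative at most −ε(x(t)) · ‖P⁻¹ Z(x(t))‖². -/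

import Mathlib

open Matrix

/-!
Along a trajectory, `z = Z(x t)` has derivative `J ẋ`. Since `Z₀ Y = P`, the closed-loop matrix
is `A + B F = X₁ Y P⁻¹`, so with `w = P⁻¹ z` we get `ż = M w` for `M = J X₁ Y`. As `P⁻¹` is
symmetric, `V̇ = 2 ⟨ż, P⁻¹ z⟩ = 2 ⟨M w, w⟩ = ⟨w, (M + Mᵀ) w⟩`, and `-(M + Mᵀ) ⪰ ε I` bounds
this by `-ε ‖w‖²`.
-/

section

variable {ι : Type*} [Fintype ι]

theorem HasDerivAt.dotProduct {f g : ℝ → ι → ℝ} {f' g' : ι → ℝ} {t : ℝ}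
    (hf : HasDerivAt f f' t) (hg : HasDerivAt g g' t) :
    HasDerivAt (fun s => f s ⬝ᵥ g s) (f' ⬝ᵥ g t + f t ⬝ᵥ g') t :=
  (HasDerivAt.fun_sum (u := Finset.univ) fun i _ =>
    (hasDerivAt_pi.1 hf i).fun_mul (hasDerivAt_pi.1 hg i)).congr_deriv Finset.sum_add_distrib

theorem HasDerivAt.mulVec {κ : Type*} [Fintype κ] (S : Matrix κ ι ℝ) {f : ℝ → ι → ℝ}
    {f' : ι → ℝ} {t : ℝ} (hf : HasDerivAt f f' t) :
    HasDerivAt (fun s => S *ᵥ f s) (S *ᵥ f') t :=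
  ((mulVecLin S).toContinuousLinearMap.hasFDerivAt (x := f t)).comp_hasDerivAt t hf

theorem Matrix.IsSymm.dotProduct_mulVec_comm {R : Type*} [CommSemiring R] {S : Matrix ι ι R}
    (hS : S.IsSymm) (x y : ι → R) : x ⬝ᵥ S *ᵥ y = y ⬝ᵥ S *ᵥ x := by
  rw [dotProduct_mulVec, ← mulVec_transpose, hS.eq, dotProduct_comm]

theorem HasDerivAt.dotProduct_mulVec_self {S : Matrix ι ι ℝ} (hS : S.IsSymm)
    {f : ℝ → ι → ℝ} {f' : ι → ℝ} {t : ℝ} (hf : HasDerivAt f f' t) :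
    HasDerivAt (fun s => f s ⬝ᵥ S *ᵥ f s) (2 * (f' ⬝ᵥ S *ᵥ f t)) t := by
  convert hf.dotProduct (hf.mulVec S) using 1
  rw [hS.dotProduct_mulVec_comm (f t), two_mul]

theorem Matrix.dotProduct_add_transpose_mulVec {R : Type*} [CommSemiring R] (M : Matrix ι ι R)
    (w : ι → R) : w ⬝ᵥ (M + Mᵀ) *ᵥ w = 2 * (M *ᵥ w ⬝ᵥ w) := by
  rw [add_mulVec, dotProduct_add, mulVec_transpose, dotProduct_comm w (w ᵥ* M),
    ← dotProduct_mulVec, dotProduct_comm, two_mul]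

theorem Matrix.PosSemidef.smul_dotProduct_le {R : Type*} [CommRing R] [PartialOrder R]
    [IsOrderedAddMonoid R] [StarRing R] [TrivialStar R] [DecidableEq ι] {S : Matrix ι ι R}
    {c : R} (h : (S - c • 1).PosSemidef) (w : ι → R) : c * (w ⬝ᵥ w) ≤ w ⬝ᵥ S *ᵥ w := by
  have := h.dotProduct_mulVec_nonneg w
  simp only [star_trivial, sub_mulVec, smul_mulVec, one_mulVec, dotProduct_sub,
    dotProduct_smul, smul_eq_mul] at this
  exact sub_nonneg.1 this

theorem EuclideanSpace.norm_toLp_sq (w : ι → ℝ) : ‖WithLp.toLp 2 w‖ ^ 2 = w ⬝ᵥ w := by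
  rw [EuclideanSpace.real_norm_sq_eq]
  simp [dotProduct, sq]

end

theorem closedLoop_eq_data_mul {R : Type*} [CommRing R] {n N m T : Type*} [Fintype N]
    [DecidableEq N] [Fintype m] [Fintype T] (A : Matrix n N R) (B : Matrix n m R)
    (U₀ : Matrix m T R) (Z₀ : Matrix N T R) (Y : Matrix T N R) (P : Matrix N N R)
    (hY : Z₀ * Y = P) (hP : IsUnit P.det) :
    A + B * (U₀ * Y * P⁻¹) = (A * Z₀ + B * U₀) * Y * P⁻¹ := by
  rw [Matrix.add_mul, Matrix.add_mul, Matrix.mul_assoc A, hY, Matrix.mul_assoc A,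
    mul_nonsing_inv P hP, Matrix.mul_one, Matrix.mul_assoc B, Matrix.mul_assoc B,
    Matrix.mul_assoc]

theorem data_driven_stabilization_lyapunov_decrease_rate_general
    (n N m T : ℕ)
    (A : Matrix (Fin n) (Fin N) ℝ) (B : Matrix (Fin n) (Fin m) ℝ)
    (U₀ : Matrix (Fin m) (Fin T) ℝ) (Z₀ : Matrix (Fin N) (Fin T) ℝ)
    (X₁ : Matrix (Fin n) (Fin T) ℝ)
    (hX₁ : X₁ = A * Z₀ + B * U₀)
    (Z : (Fin n → ℝ) → (Fin N → ℝ))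
    (hZ : Differentiable ℝ Z)
    (J : (Fin n → ℝ) → Matrix (Fin N) (Fin n) ℝ)
    (hJ : ∀ ξ, J ξ = LinearMap.toMatrix' (fderiv ℝ Z ξ).toLinearMap)
    (P : Matrix (Fin N) (Fin N) ℝ)
    (hP : P.PosDef)
    (Y : (Fin n → ℝ) → Matrix (Fin T) (Fin N) ℝ)
    (hY : ∀ ξ, Z₀ * Y ξ = P)
    (ε : (Fin n → ℝ) → ℝ)
    (hQ : ∀ ξ, (-(J ξ * X₁ * Y ξ + (J ξ * X₁ * Y ξ)ᵀ)
        - ε ξ • (1 : Matrix (Fin N) (Fin N) ℝ)).PosSemidef)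
    (F : (Fin n → ℝ) → Matrix (Fin m) (Fin N) ℝ)
    (hF : ∀ ξ, F ξ = U₀ * Y ξ * P⁻¹)
    (x : ℝ → (Fin n → ℝ))
    (hx : Differentiable ℝ x)
    (hode : ∀ t, deriv x t = (A + B * F (x t)).mulVec (Z (x t)))
    (t : ℝ) :
    ∃ d : ℝ,
      HasDerivAt (fun s => Z (x s) ⬝ᵥ P⁻¹.mulVec (Z (x s))) d t ∧
      d ≤ -ε (x t) * ‖(WithLp.equiv 2 (Fin N → ℝ)).symm (P⁻¹.mulVec (Z (x t)))‖ ^ 2 := by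
  set w := P⁻¹ *ᵥ Z (x t)
  set M := J (x t) * X₁ * Y (x t)
  have hclosed : A + B * F (x t) = X₁ * Y (x t) * P⁻¹ := by
    rw [hF, hX₁]
    exact closedLoop_eq_data_mul A B U₀ Z₀ _ P (hY _) ((isUnit_iff_isUnit_det P).1 hP.isUnit)
  have hZx : HasDerivAt (fun s => Z (x s)) (M *ᵥ w) t := by
    refine ((hZ (x t)).hasFDerivAt.comp_hasDerivAt t (hx t).hasDerivAt).congr_deriv ?_
    rw [← ContinuousLinearMap.coe_coe, ← LinearMap.toMatrix'_mulVec, ← hJ, hode, hclosed,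
      mulVec_mulVec, mulVec_mulVec, Matrix.mul_assoc, Matrix.mul_assoc, Matrix.mul_assoc]
  have hPinv : P⁻¹.IsSymm := isHermitian_iff_isSymm.1 hP.isHermitian.inv
  refine ⟨_, hZx.dotProduct_mulVec_self hPinv, ?_⟩
  have hQw := (hQ (x t)).smul_dotProduct_le w
  rw [neg_mulVec, dotProduct_neg, dotProduct_add_transpose_mulVec] at hQw
  rw [WithLp.equiv_symm_apply, EuclideanSpace.norm_toLp_sq]
  linarith

/-- Data-driven stabilization (Lyapunov decrease rate).  Under the
hypotheses of the data-driven stabilization theorem, `t ↦ V(x t)` with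
`V(ξ) = Z(ξ)ᵀ P⁻¹ Z(ξ)` is differentiable at every `t` with derivative at most
`−ε(x t) ‖P⁻¹ Z(x t)‖²` (Euclidean norm). -/
theorem data_driven_stabilization_lyapunov_decrease_rate
    (n N m T : ℕ)
    (A : Matrix (Fin n) (Fin N) ℝ) (B : Matrix (Fin n) (Fin m) ℝ)
    (U₀ : Matrix (Fin m) (Fin T) ℝ) (Z₀ : Matrix (Fin N) (Fin T) ℝ)
    (X₁ : Matrix (Fin n) (Fin T) ℝ)
    (hX₁ : X₁ = A * Z₀ + B * U₀)
    (Z : (Fin n → ℝ) → (Fin N → ℝ))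
    (hZ : Differentiable ℝ Z)
    (J : (Fin n → ℝ) → Matrix (Fin N) (Fin n) ℝ)
    (hJ : ∀ ξ, J ξ = LinearMap.toMatrix' (fderiv ℝ Z ξ).toLinearMap)
    (P : Matrix (Fin N) (Fin N) ℝ)
    (hP : P.PosDef)
    (Y : (Fin n → ℝ) → Matrix (Fin T) (Fin N) ℝ)
    (hY : ∀ ξ, Z₀ * Y ξ = P)
    (ε : (Fin n → ℝ) → ℝ)
    (hε : ∀ ξ, 0 ≤ ε ξ)
    (hQ : ∀ ξ, (-(J ξ * X₁ * Y ξ + (J ξ * X₁ * Y ξ)ᵀ)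
        - ε ξ • (1 : Matrix (Fin N) (Fin N) ℝ)).PosSemidef)
    (F : (Fin n → ℝ) → Matrix (Fin m) (Fin N) ℝ)
    (hF : ∀ ξ, F ξ = U₀ * Y ξ * P⁻¹)
    (x : ℝ → (Fin n → ℝ))
    (hx : Differentiable ℝ x)
    (hode : ∀ t, deriv x t = (A + B * F (x t)).mulVec (Z (x t)))
    (t : ℝ) :
    ∃ d : ℝ,
      HasDerivAt (fun s => Z (x s) ⬝ᵥ P⁻¹.mulVec (Z (x s))) d t ∧
      d ≤ -ε (x t) * ‖(WithLp.equiv 2 (Fin N → ℝ)).symm (P⁻¹.mulVec (Z (x t)))‖ ^ 2 :=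
  data_driven_stabilization_lyapunov_decrease_rate_general n N m T A B U₀ Z₀ X₁ hX₁ Z hZ J hJ P hP Y
    hY ε hQ F hF x hx hode t
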